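/- Let A ∈ ℝ^{n×n} with ‖A⁻¹‖₂ = η < 1, let x* be the unique solution of A x - |x| = b, and suppose M is a matrix with ‖M^s‖₂ < (1-η)/(1+η). If each outer step of the Picard-CSCS iteration computes x^{(k+1)} = M^{l_k} x^{(k)} + (I - M^{l_k}) A^{-1}(|x^{(k)}| + b) with l_k ≥ s, then ‖x^{(k+1)} - x*‖₂ ≤ θ ‖x^{(k)} - x*‖₂ for some θ < 1 independent of k; consequently x^{(k)} → x*. -/

import Mathlib

/-!
The Picard-CSCS step `x ↦ P x + (1 - P) A⁻¹ (|x| + b)` with `P = M^l` fixes the solution `x*`,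
since `A⁻¹ (|x*| + b) = x*`, and because `|·|` is 1-Lipschitz it is Lipschitz with constant
`‖P‖ + (1 + ‖P‖) η`. Once `‖M^t‖ ≤ c < (1 - η)/(1 + η)` for all `t ≥ s` with a single `c`,
this constant is at most `θ = c + (1 + c) η < 1`, so the errors decay geometrically.
-/

open scoped Matrix.Norms.L2Operator
open Filter Topology

noncomputable def enorm₂ {n : ℕ} (v : Fin n → ℝ) : ℝ :=
  ‖(EuclideanSpace.equiv (Fin n) ℝ).symm v‖

def absVec {n : ℕ} (x : Fin n → ℝ) : Fin n → ℝ := fun i => |x i|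

/-- A strict bound `‖a^t‖ < τ` for all `t ≥ s` is uniform: powers beyond `2s + 1` factor through
`a^(s+1)`, whose norm is at most `1`, so the maximum over `s ≤ t ≤ 2s + 1` bounds them all. -/
theorem exists_lt_forall_norm_pow_le {R : Type*} [SeminormedRing R] (a : R) (s : ℕ) {τ : ℝ}
    (hτ : τ ≤ 1) (h : ∀ t, s ≤ t → ‖a ^ t‖ < τ) :
    ∃ c < τ, ∀ t, s ≤ t → ‖a ^ t‖ ≤ c := by
  obtain ⟨t₀, ht₀, hmax⟩ := (Finset.Icc s (2 * s + 1)).exists_max_image (fun t => ‖a ^ t‖)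
    ⟨s, Finset.mem_Icc.mpr ⟨le_rfl, by omega⟩⟩
  refine ⟨‖a ^ t₀‖, h t₀ (Finset.mem_Icc.mp ht₀).1, fun t => ?_⟩
  induction t using Nat.strong_induction_on with
  | _ t ih =>
    intro hst
    by_cases hle : t ≤ 2 * s + 1
    · exact hmax t (Finset.mem_Icc.mpr ⟨hst, hle⟩)
    have hsplit : a ^ t = a ^ (t - (s + 1)) * a ^ (s + 1) := by rw [← pow_add]; congr 1; omega
    calc ‖a ^ t‖ ≤ ‖a ^ (t - (s + 1))‖ * ‖a ^ (s + 1)‖ := hsplit ▸ norm_mul_le _ _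
      _ ≤ ‖a ^ t₀‖ * 1 := by
          gcongr
          · exact ih _ (by omega) (by omega)
          · exact (h _ (by omega)).le.trans hτ
      _ = ‖a ^ t₀‖ := mul_one _

theorem tendsto_of_norm_sub_le_mul {E : Type*} [SeminormedAddCommGroup E] {x : ℕ → E} {y : E}
    {θ : ℝ} (hθ₀ : 0 ≤ θ) (hθ₁ : θ < 1) (h : ∀ k, ‖x (k + 1) - y‖ ≤ θ * ‖x k - y‖) :
    Tendsto x atTop (𝓝 y) := by
  rw [tendsto_iff_norm_sub_tendsto_zero]
  have hgeom : Tendsto (fun k => θ ^ k * ‖x 0 - y‖) atTop (𝓝 0) := by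
    simpa using (tendsto_pow_atTop_nhds_zero_of_lt_one hθ₀ hθ₁).mul_const ‖x 0 - y‖
  exact squeeze_zero (fun _ => norm_nonneg _)
    (fun k => le_geom (u := fun k => ‖x k - y‖) hθ₀ k fun j _ => h j) hgeom

section Euclidean

open Matrix

variable {n : ℕ}

theorem enorm₂_nonneg (v : Fin n → ℝ) : 0 ≤ enorm₂ v := norm_nonneg _

theorem enorm₂_add_le (u v : Fin n → ℝ) : enorm₂ (u + v) ≤ enorm₂ u + enorm₂ v := by
  unfold enorm₂
  rw [map_add]
  exact norm_add_le _ _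

theorem enorm₂_mulVec_le (B : Matrix (Fin n) (Fin n) ℝ) (v : Fin n → ℝ) :
    enorm₂ (B *ᵥ v) ≤ ‖B‖ * enorm₂ v :=
  B.l2_opNorm_mulVec ((EuclideanSpace.equiv (Fin n) ℝ).symm v)

theorem enorm₂_absVec_sub_absVec_le (u v : Fin n → ℝ) :
    enorm₂ (absVec u - absVec v) ≤ enorm₂ (u - v) := by
  unfold enorm₂
  rw [EuclideanSpace.norm_eq, EuclideanSpace.norm_eq]
  gcongr with i
  exact abs_abs_sub_abs_le_abs_sub (u i) (v i)

theorem tendsto_of_enorm₂_sub_le_mul {x : ℕ → Fin n → ℝ} {y : Fin n → ℝ} {θ : ℝ}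
    (hθ₀ : 0 ≤ θ) (hθ₁ : θ < 1) (h : ∀ k, enorm₂ (x (k + 1) - y) ≤ θ * enorm₂ (x k - y)) :
    Tendsto x atTop (𝓝 y) := by
  let e := (EuclideanSpace.equiv (Fin n) ℝ).symm
  rw [e.toHomeomorph.isInducing.tendsto_nhds_iff]
  refine tendsto_of_norm_sub_le_mul hθ₀ hθ₁ fun k => ?_
  simp only [Function.comp_apply, ContinuousLinearEquiv.coe_toHomeomorph, ← map_sub]
  exact h k

def picardStep (P Ainv : Matrix (Fin n) (Fin n) ℝ) (b x : Fin n → ℝ) : Fin n → ℝ :=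
  P *ᵥ x + ((1 - P) * Ainv) *ᵥ (absVec x + b)

theorem picardStep_eq_self (P : Matrix (Fin n) (Fin n) ℝ) {Ainv : Matrix (Fin n) (Fin n) ℝ}
    {b y : Fin n → ℝ} (hy : Ainv *ᵥ (absVec y + b) = y) : picardStep P Ainv b y = y := by
  rw [picardStep, ← mulVec_mulVec, hy, sub_mulVec, one_mulVec]
  abel

theorem enorm₂_picardStep_sub_le (P Ainv : Matrix (Fin n) (Fin n) ℝ) (b x y : Fin n → ℝ) :
    enorm₂ (picardStep P Ainv b x - picardStep P Ainv b y) ≤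
      (‖P‖ + (1 + ‖P‖) * ‖Ainv‖) * enorm₂ (x - y) := by
  have hdiff : picardStep P Ainv b x - picardStep P Ainv b y =
      P *ᵥ (x - y) + ((1 - P) * Ainv) *ᵥ (absVec x - absVec y) := by
    simp only [picardStep, mulVec_sub, mulVec_add]
    abel
  have hnorm : ‖(1 - P) * Ainv‖ ≤ (1 + ‖P‖) * ‖Ainv‖ := by
    calc ‖(1 - P) * Ainv‖ = ‖Ainv - P * Ainv‖ := by rw [sub_mul, one_mul]
      _ ≤ ‖Ainv‖ + ‖P‖ * ‖Ainv‖ := (norm_sub_le _ _).trans (by gcongr; exact norm_mul_le _ _)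
      _ = (1 + ‖P‖) * ‖Ainv‖ := by ring
  rw [hdiff]
  calc enorm₂ (P *ᵥ (x - y) + ((1 - P) * Ainv) *ᵥ (absVec x - absVec y))
      ≤ ‖P‖ * enorm₂ (x - y) + ‖(1 - P) * Ainv‖ * enorm₂ (absVec x - absVec y) :=
        (enorm₂_add_le _ _).trans (add_le_add (enorm₂_mulVec_le _ _) (enorm₂_mulVec_le _ _))
    _ ≤ ‖P‖ * enorm₂ (x - y) + (1 + ‖P‖) * ‖Ainv‖ * enorm₂ (x - y) := by
        gcongr
        · exact enorm₂_nonneg _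
        · exact enorm₂_absVec_sub_absVec_le x y
    _ = (‖P‖ + (1 + ‖P‖) * ‖Ainv‖) * enorm₂ (x - y) := by ring

theorem inv_mulVec_absVec_add_eq {A : Matrix (Fin n) (Fin n) ℝ} (hA : IsUnit A)
    {b y : Fin n → ℝ} (hy : A *ᵥ y - absVec y = b) : A⁻¹ *ᵥ (absVec y + b) = y := by
  rw [← hy, add_sub_cancel, mulVec_mulVec,
    nonsing_inv_mul A (A.isUnit_iff_isUnit_det.mp hA), one_mulVec]

end Euclidean

theorem picard_cscs_convergence_general {n : ℕ} (A : Matrix (Fin n) (Fin n) ℝ)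
    (hA : IsUnit A) (η : ℝ) (hη : η = ‖A⁻¹‖)
    (b xstar : Fin n → ℝ)
    (hxstar : A.mulVec xstar - absVec xstar = b)
    (M : Matrix (Fin n) (Fin n) ℝ) (s : ℕ)
    (hM : ∀ t : ℕ, s ≤ t → ‖M ^ t‖ < (1 - η) / (1 + η))
    (l : ℕ → ℕ) (hl : ∀ k, s ≤ l k)
    (x : ℕ → Fin n → ℝ)
    (hstep : ∀ k, x (k + 1) =
      (M ^ l k).mulVec (x k) +
        (((1 : Matrix (Fin n) (Fin n) ℝ) - M ^ l k) * A⁻¹).mulVec (absVec (x k) + b)) :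
    (∃ θ : ℝ, 0 ≤ θ ∧ θ < 1 ∧
      ∀ k, enorm₂ (x (k + 1) - xstar) ≤ θ * enorm₂ (x k - xstar)) ∧
    Tendsto x atTop (nhds xstar) := by
  have hη₀ : 0 ≤ η := hη ▸ norm_nonneg _
  have hτ : (1 - η) / (1 + η) ≤ 1 := by rw [div_le_one (by linarith)]; linarith
  obtain ⟨c, hcτ, hc⟩ := exists_lt_forall_norm_pow_le M s hτ hM
  have hc₀ : 0 ≤ c := (norm_nonneg _).trans (hc s le_rfl)
  have hθ₁ : c + (1 + c) * η < 1 := by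
    rw [lt_div_iff₀ (by linarith)] at hcτ
    linarith
  have hcontr : ∀ k, enorm₂ (x (k + 1) - xstar) ≤ (c + (1 + c) * η) * enorm₂ (x k - xstar) := by
    intro k
    have hfix := picardStep_eq_self (M ^ l k) (inv_mulVec_absVec_add_eq hA hxstar)
    calc enorm₂ (x (k + 1) - xstar)
        = enorm₂ (picardStep (M ^ l k) A⁻¹ b (x k) - picardStep (M ^ l k) A⁻¹ b xstar) := by
          rw [hfix, hstep k, picardStep]
      _ ≤ (‖M ^ l k‖ + (1 + ‖M ^ l k‖) * ‖A⁻¹‖) * enorm₂ (x k - xstar) :=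
          enorm₂_picardStep_sub_le _ _ _ _ _
      _ ≤ (c + (1 + c) * η) * enorm₂ (x k - xstar) := by
          have hMl := hc _ (hl k)
          rw [← hη]
          gcongr
          exact enorm₂_nonneg _
  exact ⟨⟨_, by positivity, hθ₁, hcontr⟩, tendsto_of_enorm₂_sub_le_mul (by positivity) hθ₁ hcontr⟩

/-- Convergence of the Picard-CSCS iteration: if `‖A⁻¹‖₂ = η < 1` and the inner
iteration matrix satisfies `‖M^t‖₂ < (1-η)/(1+η)` for all `t ≥ s`, then the outer
iterates contract towards the unique solution `x*` of `A x - |x| = b` and converge. -/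
theorem picard_cscs_convergence {n : ℕ} (A : Matrix (Fin n) (Fin n) ℝ)
    (hA : IsUnit A) (η : ℝ) (hη : η = ‖A⁻¹‖) (hη1 : η < 1)
    (b xstar : Fin n → ℝ)
    (hxstar : A.mulVec xstar - absVec xstar = b)
    (M : Matrix (Fin n) (Fin n) ℝ) (s : ℕ)
    (hM : ∀ t : ℕ, s ≤ t → ‖M ^ t‖ < (1 - η) / (1 + η))
    (l : ℕ → ℕ) (hl : ∀ k, s ≤ l k)
    (x : ℕ → Fin n → ℝ)
    (hstep : ∀ k, x (k + 1) =
      (M ^ l k).mulVec (x k) +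
        (((1 : Matrix (Fin n) (Fin n) ℝ) - M ^ l k) * A⁻¹).mulVec (absVec (x k) + b)) :
    (∃ θ : ℝ, 0 ≤ θ ∧ θ < 1 ∧
      ∀ k, enorm₂ (x (k + 1) - xstar) ≤ θ * enorm₂ (x k - xstar)) ∧
    Tendsto x atTop (nhds xstar) :=
  picard_cscs_convergence_general A hA η hη b xstar hxstar M s hM l hl x hstep
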